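/- For every s ≥ 0, g₀(s) = inf_{T > 0} inf { ∫_{−T}^{T} ( s² f(β(t))² α'(t)² + (1 − β(t))²/4 + β'(t)² ) dt : α, β : [−T,T] → ℝ absolutely continuous with α', β' ∈ L²(−T,T), α(−T) = 0, α(T) = 1, 0 ≤ β ≤ 1 on [−T,T], β(−T) = β(T) = 1 } (equivalence of definitions (6.6) and (6.9) of the paper). -/

import Mathlib

open MeasureTheory Set Filter
open scoped ENNReal

/-- Hypotheses on the functions `f` and `f₁` from Section 6.1 of the paper.
`f : [0,1] → [0,∞]` is real-valued, `C¹` and nondecreasing on `[0,1)` with `f(1) = ∞`,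
`f(t) = 0` iff `t = 0`, and `f₁(s) = s·f(1−s)` (with `f₁(0) = ℓ`) is strictly decreasing,
`u ↦ f₁(√u)` is convex, and `f₁(s) = ℓ − ℓ₁ s + o(s)` as `s → 0⁺`. -/
structure FHyp (ℓ ℓ₁ : ℝ) (f : ℝ → ℝ≥0∞) (f₁ : ℝ → ℝ) : Prop where
  hl : 0 < ℓ
  hl1 : 0 < ℓ₁
  freal : ∀ t ∈ Ico (0:ℝ) 1, f t ≠ ⊤
  fdiff : ∃ d : ℝ → ℝ, ContinuousOn d (Ico 0 1) ∧
    ∀ t ∈ Ico (0:ℝ) 1, HasDerivWithinAt (fun x => (f x).toReal) (d t) (Ico 0 1) t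
  fmono : MonotoneOn (fun x => (f x).toReal) (Ico 0 1)
  fzero : ∀ t ∈ Icc (0:ℝ) 1, (f t = 0 ↔ t = 0)
  ftop : f 1 = ⊤
  hf₁ : ∀ s ∈ Ioc (0:ℝ) 1, f₁ s = s * (f (1 - s)).toReal
  hf₁0 : f₁ 0 = ℓ
  f₁anti : StrictAntiOn f₁ (Icc 0 1)
  convexSqrt : ConvexOn ℝ (Icc 0 1) (fun u => f₁ (Real.sqrt u))
  lim0 : Tendsto (fun s => (f₁ s - ℓ + ℓ₁ * s) / s) (nhdsWithin 0 (Ioi 0)) (nhds 0)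

/-- `u` is locally absolutely continuous on `ℝ` with a.e. derivative `u'`. -/
def LocAC (u u' : ℝ → ℝ) : Prop :=
  (∀ a b : ℝ, IntegrableOn u' (Icc a b)) ∧
  ∀ a t : ℝ, u t = u a + ∫ x in a..t, u' x

/-- Membership of the pair `(α, β)` (with a.e. derivatives `α', β'`) in the class `𝒰₁`
of (6.8): `α' ∈ L¹(ℝ)`, `|∫ α'| = 1`, `0 ≤ β ≤ 1`, and `β(t) → 1` as `|t| → ∞`. -/
def MemU1 (α α' β β' : ℝ → ℝ) : Prop :=
  LocAC α α' ∧ LocAC β β' ∧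
  Integrable α' ∧ |∫ t : ℝ, α' t| = 1 ∧
  (∀ t : ℝ, 0 ≤ β t ∧ β t ≤ 1) ∧
  Tendsto β atTop (nhds 1) ∧ Tendsto β atBot (nhds 1)

/-- The functional `𝒢_s` of (6.7), with values in `[0,∞]` and the convention `∞·0 = 0`. -/
noncomputable def Gfun (f : ℝ → ℝ≥0∞) (s : ℝ) (α' β β' : ℝ → ℝ) : ℝ≥0∞ :=
  ∫⁻ t : ℝ, (ENNReal.ofReal (s ^ 2 * (α' t) ^ 2) * (f (β t)) ^ 2
    + ENNReal.ofReal ((1 - β t) ^ 2 / 4 + (β' t) ^ 2))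

/-- The cohesive energy density `g₀` of pristine material, definition (6.6). -/
noncomputable def g0E (f : ℝ → ℝ≥0∞) (s : ℝ) : ℝ≥0∞ :=
  sInf {x | ∃ α α' β β' : ℝ → ℝ, MemU1 α α' β β' ∧ x = Gfun f s α' β β'}

/-- Admissibility of `(α, β)` (with derivatives `α', β'`) on `[-T, T]` for the finite-interval
characterization (6.9): absolutely continuous with `L²` derivatives, `α(−T) = 0`, `α(T) = 1`,
`0 ≤ β ≤ 1`, `β(±T) = 1`. -/
def AdmT (T : ℝ) (α α' β β' : ℝ → ℝ) : Prop :=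
  IntegrableOn α' (Icc (-T) T) ∧
  IntegrableOn (fun t => (α' t) ^ 2) (Icc (-T) T) ∧
  IntegrableOn β' (Icc (-T) T) ∧
  IntegrableOn (fun t => (β' t) ^ 2) (Icc (-T) T) ∧
  (∀ t ∈ Icc (-T) T, α t = α (-T) + ∫ x in (-T)..t, α' x) ∧
  (∀ t ∈ Icc (-T) T, β t = β (-T) + ∫ x in (-T)..t, β' x) ∧
  α (-T) = 0 ∧ α T = 1 ∧
  (∀ t ∈ Icc (-T) T, 0 ≤ β t ∧ β t ≤ 1) ∧
  β (-T) = 1 ∧ β T = 1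

/-- The energy of (6.9) on the finite interval `[-T, T]`. -/
noncomputable def GfunT (f : ℝ → ℝ≥0∞) (s T : ℝ) (α' β β' : ℝ → ℝ) : ℝ≥0∞ :=
  ∫⁻ t in Icc (-T) T, (ENNReal.ofReal (s ^ 2 * (α' t) ^ 2) * (f (β t)) ^ 2
    + ENNReal.ofReal ((1 - β t) ^ 2 / 4 + (β' t) ^ 2))

/-!
An admissible pair on `[-T, T]` extends to a pair in `𝒰₁` with the same energy by freezing it
outside `[-T, T]`, where `β = 1` and the derivatives vanish, so the energy density is zero.

Conversely, take a pair in `𝒰₁` of finite energy. On `[-T, T]` truncate `α'` at height `T` (so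
that it becomes square integrable) and rescale it by `c` to have integral `1`; this multiplies the
energy by at most `max (c²) 1`, which tends to `1` because `|∫ α'| = 1`. Join `β` to the value `1`
at `±(T + 1)` by affine ramps, whose energy is `O((1 - β (±T))²)` and tends to `0`. Letting
`T → ∞` gives the reverse inequality.
-/

open Topology

lemma max_min_mem_Icc {a b : ℝ} (hab : a ≤ b) (t : ℝ) : max a (min b t) ∈ Icc a b :=
  ⟨le_max_left _ _, max_le hab (min_le_left _ _)⟩

lemma max_min_eq_of_mem_Icc {a b t : ℝ} (ht : t ∈ Icc a b) : max a (min b t) = t := by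
  rw [min_eq_right ht.2, max_eq_right ht.1]

lemma max_min_eq_or_eq_of_notMem_Ioc {a b t : ℝ} (hab : a ≤ b) (ht : t ∉ Ioc a b) :
    max a (min b t) = a ∨ max a (min b t) = b := by
  rcases le_or_gt t a with hta | hat
  · exact Or.inl (max_eq_left (min_le_of_right_le hta))
  · exact Or.inr (by rw [min_eq_left (not_le.1 fun htb => ht ⟨hat, htb⟩).le, max_eq_right hab])

lemma abs_max_neg_min_le_abs {T : ℝ} (hT : 0 ≤ T) (x : ℝ) : |max (-T) (min T x)| ≤ |x| :=
  abs_le.2 ⟨le_max_of_le_right (le_min (by linarith [abs_nonneg x]) (neg_abs_le x)),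
    max_le (by linarith [abs_nonneg x]) ((min_le_right _ _).trans (le_abs_self x))⟩

lemma abs_max_neg_min_le {T : ℝ} (hT : 0 ≤ T) (x : ℝ) : |max (-T) (min T x)| ≤ T :=
  abs_le.2 ⟨le_max_left _ _, max_le (by linarith) (min_le_left _ _)⟩

lemma intervalIntegral_indicator_Ioc_eq {a b : ℝ} (hab : a ≤ b) (u' : ℝ → ℝ) (t : ℝ) :
    ∫ x in a..t, (Ioc a b).indicator u' x = ∫ x in a..max a (min b t), u' x := by
  rcases le_total t a with hta | hat
  · rw [max_eq_left (min_le_of_right_le hta), intervalIntegral.integral_same,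
      intervalIntegral.integral_symm, intervalIntegral.integral_of_le hta,
      setIntegral_indicator measurableSet_Ioc, Ioc_inter_Ioc, max_eq_right hta,
      Ioc_eq_empty (min_le_left a b).not_gt, Measure.restrict_empty, integral_zero_measure,
      neg_zero]
  · rw [max_eq_right (le_min hab hat), intervalIntegral.integral_of_le hat,
      setIntegral_indicator measurableSet_Ioc, Ioc_inter_Ioc, max_self, min_comm,
      intervalIntegral.integral_of_le (le_min hab hat)]

namespace LocAC

variable {u u' v v' : ℝ → ℝ}

lemma intervalIntegrable (hu : LocAC u u') (a b : ℝ) : IntervalIntegrable u' volume a b :=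
  IntegrableOn.intervalIntegrable (hu.1 _ _)

lemma add (hu : LocAC u u') (hv : LocAC v v') :
    LocAC (fun t => u t + v t) (fun t => u' t + v' t) := by
  refine ⟨fun a b => (hu.1 a b).add (hv.1 a b), fun a t => ?_⟩
  dsimp only
  rw [intervalIntegral.integral_add (hu.intervalIntegrable a t) (hv.intervalIntegrable a t),
    hu.2 a t, hv.2 a t]
  ring

lemma const_mul (c : ℝ) (hu : LocAC u u') : LocAC (fun t => c * u t) (fun t => c * u' t) := by
  refine ⟨fun a b => (hu.1 a b).const_mul c, fun a t => ?_⟩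
  dsimp only
  rw [intervalIntegral.integral_const_mul, hu.2 a t]
  ring

lemma comp_clamp {a b : ℝ} {u u' : ℝ → ℝ} (hab : a ≤ b) (hu' : IntegrableOn u' (Icc a b))
    (hu : ∀ t ∈ Icc a b, u t = u a + ∫ x in a..t, u' x) :
    LocAC (fun t => u (max a (min b t))) ((Ioc a b).indicator u') := by
  have hint : Integrable ((Ioc a b).indicator u') :=
    (hu'.mono_set Ioc_subset_Icc_self).integrable_indicator measurableSet_Ioc
  have hclamp : ∀ t, u (max a (min b t)) = u a + ∫ x in a..t, (Ioc a b).indicator u' x :=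
    fun t => by
      rw [intervalIntegral_indicator_Ioc_eq hab]
      exact hu _ (max_min_mem_Icc hab t)
  refine ⟨fun _ _ => hint.integrableOn, fun c t => ?_⟩
  dsimp only
  rw [hclamp t, hclamp c, ← intervalIntegral.integral_add_adjacent_intervals
    (hint.intervalIntegrable (a := a) (b := c)) hint.intervalIntegrable, add_assoc]

end LocAC

section Extension

variable {T : ℝ} {α α' β β' : ℝ → ℝ}

lemma memU1_comp_clamp (hT : 0 ≤ T) (h : AdmT T α α' β β') :
    MemU1 (fun t => α (max (-T) (min T t))) ((Ioc (-T) T).indicator α')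
      (fun t => β (max (-T) (min T t))) ((Ioc (-T) T).indicator β') := by
  obtain ⟨hα', -, hβ', -, hα, hβ, hα0, hα1, hβ01, hβ0, hβ1⟩ := h
  have hTT : -T ≤ T := by linarith
  refine ⟨LocAC.comp_clamp hTT hα' hα, LocAC.comp_clamp hTT hβ' hβ,
    (hα'.mono_set Ioc_subset_Icc_self).integrable_indicator measurableSet_Ioc, ?_,
    fun t => hβ01 _ (max_min_mem_Icc hTT t), ?_, ?_⟩
  · have hFTC := hα T ⟨hTT, le_rfl⟩
    rw [hα0, hα1, zero_add] at hFTC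
    rw [integral_indicator measurableSet_Ioc, ← intervalIntegral.integral_of_le hTT, ← hFTC,
      abs_one]
  · refine tendsto_const_nhds.congr' ?_
    filter_upwards [eventually_ge_atTop T] with t ht
    rw [min_eq_left ht, max_eq_right hTT, hβ1]
  · refine tendsto_const_nhds.congr' ?_
    filter_upwards [eventually_le_atBot (-T)] with t ht
    rw [min_eq_right (ht.trans hTT), max_eq_left ht, hβ0]

lemma gfun_comp_clamp (f : ℝ → ℝ≥0∞) (s : ℝ) (hT : 0 ≤ T) (hβ0 : β (-T) = 1) (hβ1 : β T = 1) :
    Gfun f s ((Ioc (-T) T).indicator α') (fun t => β (max (-T) (min T t)))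
      ((Ioc (-T) T).indicator β') = GfunT f s T α' β β' := by
  have hTT : -T ≤ T := by linarith
  rw [GfunT, ← setLIntegral_congr Ioc_ae_eq_Icc, ← lintegral_indicator measurableSet_Ioc, Gfun]
  refine lintegral_congr fun t => ?_
  by_cases ht : t ∈ Ioc (-T) T
  · simp only [indicator_of_mem ht, max_min_eq_of_mem_Icc (Ioc_subset_Icc_self ht)]
  · have hβt : β (max (-T) (min T t)) = 1 := by
      rcases max_min_eq_or_eq_of_notMem_Ioc hTT ht with h | h <;> rw [h] <;> assumption
    simp [indicator_of_notMem ht, hβt]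

lemma g0E_le_gfunT (f : ℝ → ℝ≥0∞) (s : ℝ) (hT : 0 ≤ T) (h : AdmT T α α' β β') :
    g0E f s ≤ GfunT f s T α' β β' := by
  have hU := memU1_comp_clamp hT h
  obtain ⟨-, -, -, -, -, -, -, -, -, hβ0, hβ1⟩ := h
  rw [← gfun_comp_clamp f s hT hβ0 hβ1]
  exact sInf_le ⟨_, _, _, _, hU, rfl⟩

end Extension

noncomputable def energyDensity (f : ℝ → ℝ≥0∞) (s a b b' : ℝ) : ℝ≥0∞ :=
  ENNReal.ofReal (s ^ 2 * a ^ 2) * f b ^ 2 + ENNReal.ofReal ((1 - b) ^ 2 / 4 + b' ^ 2)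

section EnergyDensity

variable (f : ℝ → ℝ≥0∞) (s : ℝ)

lemma gfunT_eq (T : ℝ) (α' β β' : ℝ → ℝ) :
    GfunT f s T α' β β' = ∫⁻ t in Icc (-T) T, energyDensity f s (α' t) (β t) (β' t) := rfl

lemma ofReal_sq_le_energyDensity (a b b' : ℝ) :
    ENNReal.ofReal (b' ^ 2) ≤ energyDensity f s a b b' :=
  (ENNReal.ofReal_le_ofReal (le_add_of_nonneg_left (by positivity))).trans le_add_self

lemma energyDensity_mul_le {c M a a₀ : ℝ} (hc : c ^ 2 ≤ M) (hM : 1 ≤ M) (ha : a ^ 2 ≤ a₀ ^ 2)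
    (b b' : ℝ) :
    energyDensity f s (c * a) b b' ≤ ENNReal.ofReal M * energyDensity f s a₀ b b' := by
  have hM0 : 0 ≤ M := zero_le_one.trans hM
  rw [energyDensity, energyDensity, mul_add, ← mul_assoc, ← ENNReal.ofReal_mul hM0,
    ← ENNReal.ofReal_mul hM0]
  gcongr ENNReal.ofReal ?_ * _ + ENNReal.ofReal ?_
  · calc s ^ 2 * (c * a) ^ 2 = s ^ 2 * (c ^ 2 * a ^ 2) := by ring
      _ ≤ s ^ 2 * (M * a₀ ^ 2) := by gcongr
      _ = M * (s ^ 2 * a₀ ^ 2) := by ring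
  · exact le_mul_of_one_le_left (by positivity) hM

lemma energyDensity_ramp_le {d u b' : ℝ} (hu0 : 0 ≤ u) (hu1 : u ≤ 1) (hb' : b' ^ 2 = d ^ 2) :
    energyDensity f s 0 (1 - d * u) b' ≤ ENNReal.ofReal (5 / 4 * d ^ 2) := by
  have hdu : (d * u) ^ 2 ≤ d ^ 2 := by
    rw [mul_pow]; exact mul_le_of_le_one_right (sq_nonneg d) (pow_le_one₀ hu0 hu1)
  rw [energyDensity, zero_pow two_ne_zero, mul_zero, ENNReal.ofReal_zero, zero_mul, zero_add]
  exact ENNReal.ofReal_le_ofReal (by rw [hb']; linarith)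

lemma memLp_two_of_gfun_ne_top {α' β β' : ℝ → ℝ} {S : Set ℝ}
    (hβ' : AEStronglyMeasurable β' (volume.restrict S)) (hG : Gfun f s α' β β' ≠ ⊤) :
    MemLp β' 2 (volume.restrict S) := by
  refine (memLp_two_iff_integrable_sq hβ').2 ⟨hβ'.pow 2, ?_⟩
  rw [hasFiniteIntegral_iff_ofReal (.of_forall fun _ => sq_nonneg _)]
  calc ∫⁻ t in S, ENNReal.ofReal (β' t ^ 2) ≤ ∫⁻ t, ENNReal.ofReal (β' t ^ 2) :=
        setLIntegral_le_lintegral _ _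
    _ ≤ Gfun f s α' β β' := lintegral_mono fun _ => ofReal_sq_le_energyDensity f s _ _ _
    _ < ⊤ := hG.lt_top

end EnergyDensity

noncomputable def truncate (T : ℝ) (φ : ℝ → ℝ) : ℝ → ℝ :=
  (Ioc (-T) T).indicator fun t => max (-T) (min T (φ t))

section Truncate

variable {T t : ℝ} {φ : ℝ → ℝ}

lemma abs_truncate_le_abs (hT : 0 ≤ T) (t : ℝ) : |truncate T φ t| ≤ |φ t| :=
  (norm_indicator_le_norm_self (fun t => max (-T) (min T (φ t))) t).trans
    (abs_max_neg_min_le_abs hT _)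

lemma truncate_eq_zero_of_notMem (ht : t ∉ Ioc (-T) T) : truncate T φ t = 0 :=
  indicator_of_notMem ht _

lemma truncate_eq_self (ht : t ∈ Ioc (-T) T) (hφt : |φ t| ≤ T) : truncate T φ t = φ t := by
  rw [truncate, indicator_of_mem ht, max_min_eq_of_mem_Icc (abs_le.1 hφt)]

lemma MeasureTheory.AEStronglyMeasurable.truncate (hφ : AEStronglyMeasurable φ) :
    AEStronglyMeasurable (truncate T φ) :=
  ((continuous_const.max (continuous_const.min continuous_id)).comp_aestronglyMeasurable
    hφ).indicator measurableSet_Ioc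

lemma tendsto_integral_truncate (hφ : Integrable φ) :
    Tendsto (fun T => ∫ t, truncate T φ t) atTop (𝓝 (∫ t, φ t)) := by
  refine tendsto_integral_filter_of_dominated_convergence (fun t => |φ t|)
    (.of_forall fun _ => hφ.aestronglyMeasurable.truncate) ?_ hφ.abs (.of_forall fun t => ?_)
  · filter_upwards [eventually_ge_atTop 0] with T hT
    exact .of_forall fun t => abs_truncate_le_abs hT t
  · refine tendsto_const_nhds.congr' ?_
    filter_upwards [eventually_gt_atTop |t|, eventually_ge_atTop |φ t|] with T htT hφT
    have ht : t ∈ Ioc (-T) T := ⟨by linarith [neg_abs_le t], (le_abs_self t).trans htT.le⟩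
    exact (truncate_eq_self ht hφT).symm

lemma memLp_truncate (hT : 0 ≤ T) (hφ : AEStronglyMeasurable φ) (p : ℝ≥0∞) :
    MemLp (truncate T φ) p := by
  have hclamp : AEStronglyMeasurable fun t => max (-T) (min T (φ t)) :=
    (continuous_const.max (continuous_const.min continuous_id)).comp_aestronglyMeasurable hφ
  exact (memLp_indicator_iff_restrict measurableSet_Ioc).2 <|
    MemLp.of_bound hclamp.restrict T (.of_forall fun _ => abs_max_neg_min_le hT _)

lemma intervalIntegral_truncate {a b : ℝ} (ha : a ≤ -T) (hb : T ≤ b) (hab : a ≤ b) :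
    ∫ x in a..b, truncate T φ x = ∫ x, truncate T φ x := by
  rw [intervalIntegral.integral_of_le hab]
  exact setIntegral_eq_integral_of_forall_compl_eq_zero fun x hx =>
    truncate_eq_zero_of_notMem fun h => hx ⟨ha.trans_lt h.1, h.2.trans hb⟩

end Truncate

/-- `β` on `[-T, T]`, continued by affine ramps that reach the value `1` at `±(T + 1)`. -/
def rampExt (T : ℝ) (β : ℝ → ℝ) (t : ℝ) : ℝ :=
  β (max (-T) (min T t)) + (β (-T) - 1) * (max (-(T + 1)) (min (-T) t) + T)
    + (1 - β T) * (max T (min (T + 1) t) - T)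

noncomputable def rampExtDeriv (T : ℝ) (β β' : ℝ → ℝ) (t : ℝ) : ℝ :=
  (Ioc (-T) T).indicator β' t + (β (-T) - 1) * (Ioc (-(T + 1)) (-T)).indicator 1 t
    + (1 - β T) * (Ioc T (T + 1)).indicator 1 t

section RampExt

variable {T t : ℝ} {β β' : ℝ → ℝ}

lemma LocAC.rampExt (hT : 0 ≤ T) (hβ : LocAC β β') : LocAC (rampExt T β) (rampExtDeriv T β β') :=
  have hlin : ∀ k a b : ℝ, a ≤ b → LocAC (fun t => max a (min b t) + k) ((Ioc a b).indicator 1) :=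
    fun k a b hab => LocAC.comp_clamp (u := fun x => x + k) hab
      (integrableOn_const measure_Icc_lt_top.ne) fun t _ => by
        simp only [Pi.one_apply, intervalIntegral.integral_const, smul_eq_mul, mul_one]; ring
  ((LocAC.comp_clamp (by linarith) (hβ.1 _ _) fun t _ => hβ.2 _ t).add
    ((hlin T _ _ (by linarith)).const_mul _)).add ((hlin (-T) _ _ (by linarith)).const_mul _)

lemma rampExt_of_mem_Icc (ht : t ∈ Icc (-T) T) : rampExt T β t = β t := by
  rw [rampExt, max_min_eq_of_mem_Icc ht, min_eq_left ht.1, max_eq_right (by linarith),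
    min_eq_right (by linarith [ht.2]), max_eq_left ht.2]
  ring

lemma rampExt_of_mem_Icc_left (hT : 0 ≤ T) (ht : t ∈ Icc (-(T + 1)) (-T)) :
    rampExt T β t = 1 - (1 - β (-T)) * (T + 1 + t) := by
  rw [rampExt, max_min_eq_of_mem_Icc ht, min_eq_right (by linarith [ht.2]), max_eq_left ht.2,
    min_eq_right (by linarith [ht.2]), max_eq_left (by linarith [ht.2])]
  ring

lemma rampExt_of_mem_Icc_right (hT : 0 ≤ T) (ht : t ∈ Icc T (T + 1)) :
    rampExt T β t = 1 - (1 - β T) * (T + 1 - t) := by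
  rw [rampExt, max_min_eq_of_mem_Icc ht, min_eq_left ht.1, max_eq_right (by linarith),
    min_eq_left (by linarith [ht.1]), max_eq_right (by linarith)]
  ring

lemma rampExtDeriv_of_mem_Ioc (ht : t ∈ Ioc (-T) T) :
    rampExtDeriv T β β' t = β' t := by
  rw [rampExtDeriv, indicator_of_mem ht, indicator_of_notMem fun h => ht.1.not_ge h.2,
    indicator_of_notMem fun h => h.1.not_ge ht.2]
  ring

lemma rampExtDeriv_of_mem_Ioc_left (hT : 0 ≤ T) (ht : t ∈ Ioc (-(T + 1)) (-T)) :
    rampExtDeriv T β β' t = β (-T) - 1 := by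
  rw [rampExtDeriv, indicator_of_notMem fun h => h.1.not_ge ht.2, indicator_of_mem ht,
    indicator_of_notMem fun h => h.1.not_ge (ht.2.trans (by linarith))]
  simp

lemma rampExtDeriv_of_mem_Ioc_right (hT : 0 ≤ T) (ht : t ∈ Ioc T (T + 1)) :
    rampExtDeriv T β β' t = 1 - β T := by
  rw [rampExtDeriv, indicator_of_notMem fun h => ht.1.not_ge h.2,
    indicator_of_notMem fun h => ht.1.not_ge (h.2.trans (by linarith)), indicator_of_mem ht]
  simp

lemma rampExt_mem_unitInterval (hT : 0 ≤ T) (hβ01 : ∀ t, 0 ≤ β t ∧ β t ≤ 1)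
    (ht : t ∈ Icc (-(T + 1)) (T + 1)) : 0 ≤ rampExt T β t ∧ rampExt T β t ≤ 1 := by
  rcases le_total t (-T) with htl | htl
  · rw [rampExt_of_mem_Icc_left hT ⟨ht.1, htl⟩]
    obtain ⟨h0, h1⟩ := hβ01 (-T)
    constructor <;> nlinarith [ht.1]
  rcases le_total t T with htr | htr
  · rw [rampExt_of_mem_Icc ⟨htl, htr⟩]; exact hβ01 t
  · rw [rampExt_of_mem_Icc_right hT ⟨htr, ht.2⟩]
    obtain ⟨h0, h1⟩ := hβ01 T
    constructor <;> nlinarith [ht.2]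

end RampExt

section Competitor

variable {T : ℝ} {α' β β' : ℝ → ℝ}

lemma memLp_rampExtDeriv (hβ' : MemLp β' 2 (volume.restrict (Ioc (-T) T))) :
    MemLp (rampExtDeriv T β β') 2 := by
  have hramp : ∀ a b : ℝ, MemLp ((Ioc a b).indicator (1 : ℝ → ℝ)) 2 :=
    fun a b => memLp_indicator_const 2 measurableSet_Ioc 1 (Or.inr measure_Ioc_lt_top.ne)
  exact (((memLp_indicator_iff_restrict measurableSet_Ioc).2 hβ').add
    ((hramp _ _).const_mul _)).add ((hramp _ _).const_mul _)

lemma admT_competitor (hT : 0 ≤ T) (hα' : AEStronglyMeasurable α') (hβ : LocAC β β')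
    (hβ01 : ∀ t, 0 ≤ β t ∧ β t ≤ 1) (hβ' : MemLp β' 2 (volume.restrict (Ioc (-T) T))) {c : ℝ}
    (hc : c * ∫ t, truncate T α' t = 1) :
    AdmT (T + 1) (fun t => ∫ x in (-(T + 1))..t, c * truncate T α' x)
      (fun t => c * truncate T α' t) (rampExt T β) (rampExtDeriv T β β') := by
  have hα'2 : MemLp (fun t => c * truncate T α' t) 2 := (memLp_truncate hT hα' 2).const_mul c
  have hβ'2 : MemLp (rampExtDeriv T β β') 2 := memLp_rampExtDeriv hβ'
  have hloc := hβ.rampExt hT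
  refine ⟨(hα'2.restrict _).integrable one_le_two, (hα'2.restrict _).integrable_sq,
    hloc.1 _ _, (hβ'2.restrict _).integrable_sq, fun t _ => by simp, fun t _ => hloc.2 _ t,
    intervalIntegral.integral_same, ?_, fun t ht => rampExt_mem_unitInterval hT hβ01 ht, ?_, ?_⟩
  · dsimp only
    rw [intervalIntegral.integral_const_mul,
      intervalIntegral_truncate (by linarith) (by linarith) (by linarith), hc]
  · rw [rampExt_of_mem_Icc_left hT ⟨le_rfl, by linarith⟩]; ring
  · rw [rampExt_of_mem_Icc_right hT ⟨by linarith, le_rfl⟩]; ring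

lemma gfunT_competitor_le (f : ℝ → ℝ≥0∞) (s : ℝ) (hT : 0 ≤ T) (c : ℝ) :
    GfunT f s (T + 1) (fun t => c * truncate T α' t) (rampExt T β) (rampExtDeriv T β β') ≤
      ENNReal.ofReal (5 / 4 * (1 - β (-T)) ^ 2) + ENNReal.ofReal (max (c ^ 2) 1) * Gfun f s α' β β'
        + ENNReal.ofReal (5 / 4 * (1 - β T) ^ 2) := by
  have h₁ : -(T + 1) ≤ -T := by linarith
  have h₂ : -T ≤ T := by linarith
  have h₃ : T ≤ T + 1 := by linarith
  have hvol : ∀ a b : ℝ, b - a = 1 → volume (Ioc a b) = 1 := fun a b hab => by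
    rw [Real.volume_Ioc, hab, ENNReal.ofReal_one]
  rw [gfunT_eq, ← setLIntegral_congr Ioc_ae_eq_Icc, ← Ioc_union_Ioc_eq_Ioc (h₁.trans h₂) h₃,
    ← Ioc_union_Ioc_eq_Ioc h₁ h₂]
  refine (lintegral_union_le _ _ _).trans
    (add_le_add ((lintegral_union_le _ _ _).trans (add_le_add ?_ ?_)) ?_)
  · refine (setLIntegral_mono' measurableSet_Ioc fun t ht => ?_).trans_eq
      (by rw [setLIntegral_const, hvol _ _ (by ring), mul_one])
    rw [truncate_eq_zero_of_notMem fun h => h.1.not_ge ht.2, mul_zero,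
      rampExt_of_mem_Icc_left hT (Ioc_subset_Icc_self ht), rampExtDeriv_of_mem_Ioc_left hT ht]
    exact energyDensity_ramp_le f s (by linarith [ht.1]) (by linarith [ht.2]) (by ring)
  · refine (setLIntegral_mono' measurableSet_Ioc fun t ht => ?_).trans
      ((setLIntegral_le_lintegral _ _).trans_eq (lintegral_const_mul' _ _ ENNReal.ofReal_ne_top))
    rw [rampExt_of_mem_Icc (Ioc_subset_Icc_self ht), rampExtDeriv_of_mem_Ioc ht]
    exact energyDensity_mul_le f s (le_max_left _ _) (le_max_right _ _)
      (sq_le_sq.2 (abs_truncate_le_abs hT t)) _ _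
  · refine (setLIntegral_mono' measurableSet_Ioc fun t ht => ?_).trans_eq
      (by rw [setLIntegral_const, hvol _ _ (by ring), mul_one])
    rw [truncate_eq_zero_of_notMem fun h => ht.1.not_ge h.2, mul_zero,
      rampExt_of_mem_Icc_right hT (Ioc_subset_Icc_self ht), rampExtDeriv_of_mem_Ioc_right hT ht]
    exact energyDensity_ramp_le f s (by linarith [ht.2]) (by linarith [ht.1]) rfl

end Competitor

/-- The value of `g₀` given by the finite-interval characterization (6.9). -/
noncomputable def g0T (f : ℝ → ℝ≥0∞) (s : ℝ) : ℝ≥0∞ :=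
  ⨅ (T : ℝ) (_ : 0 < T),
    sInf {x | ∃ α α' β β' : ℝ → ℝ, AdmT T α α' β β' ∧ x = GfunT f s T α' β β'}

section Comparison

variable (f : ℝ → ℝ≥0∞) (s : ℝ) {α α' β β' : ℝ → ℝ}

lemma g0E_le_g0T : g0E f s ≤ g0T f s := by
  refine le_iInf₂ fun T hT => le_sInf ?_
  rintro _ ⟨_, _, _, _, h, rfl⟩
  exact g0E_le_gfunT f s hT.le h

lemma g0T_le_competitor {T : ℝ} (hT : 0 ≤ T) (hα' : AEStronglyMeasurable α') (hβ : LocAC β β')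
    (hβ01 : ∀ t, 0 ≤ β t ∧ β t ≤ 1) (hG : Gfun f s α' β β' ≠ ⊤) {c : ℝ}
    (hc : c * ∫ t, truncate T α' t = 1) :
    g0T f s ≤ ENNReal.ofReal (5 / 4 * (1 - β (-T)) ^ 2)
      + ENNReal.ofReal (max (c ^ 2) 1) * Gfun f s α' β β'
        + ENNReal.ofReal (5 / 4 * (1 - β T) ^ 2) := by
  have hβ' := memLp_two_of_gfun_ne_top f s
    ((hβ.1 (-T) T).mono_set Ioc_subset_Icc_self).aestronglyMeasurable hG
  refine le_trans ?_ (gfunT_competitor_le f s hT c)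
  refine (iInf₂_le (T + 1) (by linarith)).trans (sInf_le ?_)
  exact ⟨_, _, _, _, admT_competitor hT hα' hβ hβ01 hβ' hc, rfl⟩

lemma g0T_le_gfun (h : MemU1 α α' β β') : g0T f s ≤ Gfun f s α' β β' := by
  obtain ⟨-, hβ, hα', hI, hβ01, hβtop, hβbot⟩ := h
  rcases eq_or_ne (Gfun f s α' β β') ⊤ with hG | hG
  · exact hG ▸ le_top
  have hI0 : ∫ t, α' t ≠ 0 := fun h => by simp [h] at hI
  have hJ := tendsto_integral_truncate hα'
  have hM : Tendsto (fun T => max ((∫ t, truncate T α' t)⁻¹ ^ 2) 1) atTop (𝓝 1) := by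
    have hI2 : (∫ t, α' t)⁻¹ ^ 2 = 1 := by rw [inv_pow, ← sq_abs, hI, one_pow, inv_one]
    simpa [hI2] using ((hJ.inv₀ hI0).pow 2).max (tendsto_const_nhds (x := (1 : ℝ)))
  have hramp : ∀ b : ℝ → ℝ, Tendsto b atTop (𝓝 1) →
      Tendsto (fun T => ENNReal.ofReal (5 / 4 * (1 - b T) ^ 2)) atTop (𝓝 0) := fun b hb => by
    simpa using ENNReal.tendsto_ofReal
      ((((tendsto_const_nhds (x := (1 : ℝ))).sub hb).pow 2).const_mul (5 / 4))
  have hbound := ((hramp _ (hβbot.comp tendsto_neg_atTop_atBot)).add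
    (ENNReal.Tendsto.mul_const (ENNReal.tendsto_ofReal hM) (Or.inr hG))).add (hramp _ hβtop)
  rw [ENNReal.ofReal_one, one_mul, zero_add, add_zero] at hbound
  refine ge_of_tendsto hbound ?_
  filter_upwards [eventually_ge_atTop 0, hJ.eventually_ne hI0] with T hT hJT
  exact g0T_le_competitor f s hT hα'.aestronglyMeasurable hβ hβ01 hG (inv_mul_cancel₀ hJT)

lemma g0T_le_g0E : g0T f s ≤ g0E f s := by
  refine le_sInf ?_
  rintro _ ⟨_, _, _, _, h, rfl⟩
  exact g0T_le_gfun f s h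

end Comparison

theorem stmt_13_general (f : ℝ → ℝ≥0∞) (s : ℝ) :
    g0E f s = ⨅ (T : ℝ) (_ : 0 < T),
      sInf {x | ∃ α α' β β' : ℝ → ℝ, AdmT T α α' β β' ∧ x = GfunT f s T α' β β'} :=
  le_antisymm (g0E_le_g0T f s) (g0T_le_g0E f s)

/-- equivalence of the definitions (6.6) and (6.9) of `g₀`. -/
theorem stmt_13 (ℓ ℓ₁ : ℝ) (f : ℝ → ℝ≥0∞) (f₁ : ℝ → ℝ) (hf : FHyp ℓ ℓ₁ f f₁)
    (s : ℝ) (hs : 0 ≤ s) :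
    g0E f s = ⨅ (T : ℝ) (_ : 0 < T),
      sInf {x | ∃ α α' β β' : ℝ → ℝ, AdmT T α α' β β' ∧ x = GfunT f s T α' β β'} :=
  stmt_13_general f s
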